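/- arXiv:2011.07709 — 2 statements merged into one kernel-verified Lean document; each statement's English description precedes it below -/
import Mathlib

section
/- For any positive integer k and any real number β with k(β−1)+1 > 0, and stepsizes τ_n = t_n − t_{n−1} of a partition 0 = t_0 < t_1 < ⋯ < t_N = T satisfying τ_n ≤ C (t_n/T)^β τ with τ the maximal stepsize, there is a constant C' (depending on k, β, C, T but not on τ or N) such that ∑_{j=k+1}^{N} τ_j^{k+1} t_j^{−k} ≤ C' τ^k. -/
/-!
Write `p = k(β-1) + 1 > 0`. The grading condition `τ_j ≤ (C τ / T^β) t_j^β` bounds each term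
`τ_j^(k+1) t_j^(-k)` by `(C τ / T^β)^k τ_j t_j^(p-1)`, so the sum is `(C τ / T^β)^k` times a
right-endpoint Riemann sum of `s ↦ s^(p-1)` on `[0, T]`. Such a Riemann sum is at most
`T^p / min 1 p`: each term `(t_j - t_{j-1}) t_j^(p-1)` is at most `(t_j^p - t_{j-1}^p) / min 1 p`
(by Bernoulli's inequality if `p ≤ 1`, since `s^(p-1)` is increasing if `p ≥ 1`), and these
bounds telescope.
-/

open Finset

theorem sum_Icc_one_sub_pred (f : ℕ → ℝ) (N : ℕ) :
    ∑ j ∈ Icc 1 N, (f j - f (j - 1)) = f N - f 0 := by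
  rw [← Ico_add_one_right_eq_Icc, sum_Ico_eq_sum_range]
  simpa [add_comm] using sum_range_sub f N

namespace Real

theorem sub_mul_rpow_sub_one_le_rpow_sub_rpow {x y p : ℝ} (hp : 1 ≤ p) (hx : 0 ≤ x)
    (hxy : x ≤ y) : (y - x) * y ^ (p - 1) ≤ y ^ p - x ^ p := by
  have hsplit : ∀ z : ℝ, 0 ≤ z → z ^ p = z ^ (p - 1) * z := fun z hz => by
    rw [← rpow_add_one' hz (by linarith), sub_add_cancel]
  have hmono : x ^ (p - 1) ≤ y ^ (p - 1) := rpow_le_rpow hx hxy (by linarith)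
  rw [hsplit y (hx.trans hxy), hsplit x hx]
  nlinarith

theorem mul_sub_mul_rpow_sub_one_le_rpow_sub_rpow {x y p : ℝ} (hp0 : 0 ≤ p) (hp1 : p ≤ 1)
    (hx : 0 ≤ x) (hxy : x ≤ y) : p * ((y - x) * y ^ (p - 1)) ≤ y ^ p - x ^ p := by
  rcases (hx.trans hxy).eq_or_lt with hy | hy
  · obtain rfl : x = 0 := by linarith
    simp [← hy]
  have hbern : (x / y) ^ p ≤ 1 + p * (x / y - 1) := by
    simpa using rpow_one_add_le_one_add_mul_self (s := x / y - 1)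
      (by linarith [div_nonneg hx hy.le]) hp0 hp1
  have hscale : x ^ p = (x / y) ^ p * y ^ p := by
    rw [div_rpow hx hy.le, div_mul_cancel₀ _ (rpow_pos_of_pos hy p).ne']
  rw [hscale, rpow_sub_one hy.ne']
  have hid : (1 + p * (x / y - 1)) * y ^ p = y ^ p - p * ((y - x) * (y ^ p / y)) := by
    field_simp
    ring
  linarith [mul_le_mul_of_nonneg_right hbern (rpow_nonneg hy.le p)]

theorem min_one_mul_sub_mul_rpow_sub_one_le_rpow_sub_rpow {x y p : ℝ} (hp : 0 < p)
    (hx : 0 ≤ x) (hxy : x ≤ y) : min 1 p * ((y - x) * y ^ (p - 1)) ≤ y ^ p - x ^ p := by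
  have hterm : 0 ≤ (y - x) * y ^ (p - 1) :=
    mul_nonneg (sub_nonneg.2 hxy) (rpow_nonneg (hx.trans hxy) _)
  rcases le_total p 1 with hp1 | hp1
  · exact (mul_le_mul_of_nonneg_right (min_le_right 1 p) hterm).trans
      (mul_sub_mul_rpow_sub_one_le_rpow_sub_rpow hp.le hp1 hx hxy)
  · exact (mul_le_of_le_one_left hterm (min_le_left 1 p)).trans
      (sub_mul_rpow_sub_one_le_rpow_sub_rpow hp1 hx hxy)

end Real

theorem min_one_mul_sum_sub_mul_rpow_sub_one_le {t : ℕ → ℝ} {N : ℕ} {p : ℝ} (m : ℕ)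
    (hp : 0 < p) (ht : MonotoneOn t (Set.Iic N)) (ht0 : 0 ≤ t 0) :
    min 1 p * ∑ j ∈ Icc (m + 1) N, (t j - t (j - 1)) * t j ^ (p - 1) ≤ t N ^ p - t 0 ^ p := by
  have hnode : ∀ j ∈ Icc 1 N, 0 ≤ t (j - 1) ∧ t (j - 1) ≤ t j := fun j hj => by
    obtain ⟨hj1, hjN⟩ := mem_Icc.1 hj
    exact ⟨ht0.trans (ht (Nat.zero_le N) (show j - 1 ≤ N by omega) (Nat.zero_le _)),
      ht (show j - 1 ≤ N by omega) hjN (Nat.sub_le j 1)⟩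
  rw [← sum_Icc_one_sub_pred (fun j => t j ^ p), mul_sum]
  calc ∑ j ∈ Icc (m + 1) N, min 1 p * ((t j - t (j - 1)) * t j ^ (p - 1))
      ≤ ∑ j ∈ Icc 1 N, min 1 p * ((t j - t (j - 1)) * t j ^ (p - 1)) :=
        sum_le_sum_of_subset_of_nonneg (Icc_subset_Icc (by omega) le_rfl) fun j hj _ =>
          mul_nonneg (lt_min one_pos hp).le <| mul_nonneg (sub_nonneg.2 (hnode j hj).2)
            (Real.rpow_nonneg ((hnode j hj).1.trans (hnode j hj).2) _)
    _ ≤ ∑ j ∈ Icc 1 N, (t j ^ p - t (j - 1) ^ p) := sum_le_sum fun j hj =>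
        Real.min_one_mul_sub_mul_rpow_sub_one_le_rpow_sub_rpow hp (hnode j hj).1 (hnode j hj).2

theorem pow_succ_mul_rpow_neg_le {k : ℕ} {s x c β : ℝ} (hx : 0 < x) (hs : 0 ≤ s)
    (hsc : s ≤ c * x ^ β) :
    s ^ (k + 1) * x ^ (-(k : ℝ)) ≤ c ^ k * (s * x ^ ((k : ℝ) * (β - 1))) := by
  have hexp : (x ^ β) ^ k * x ^ (-(k : ℝ)) = x ^ ((k : ℝ) * (β - 1)) := by
    rw [← Real.rpow_natCast, ← Real.rpow_mul hx.le, ← Real.rpow_add hx]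
    ring_nf
  calc s ^ (k + 1) * x ^ (-(k : ℝ)) = s ^ k * (s * x ^ (-(k : ℝ))) := by ring
    _ ≤ (c * x ^ β) ^ k * (s * x ^ (-(k : ℝ))) := by gcongr
    _ = c ^ k * (s * ((x ^ β) ^ k * x ^ (-(k : ℝ)))) := by ring
    _ = c ^ k * (s * x ^ ((k : ℝ) * (β - 1))) := by rw [hexp]

theorem pow_succ_mul_rpow_neg_le_of_graded {k : ℕ} {s x β C T τ : ℝ} (hT : 0 < T) (hx : 0 < x)
    (hs : 0 ≤ s) (hgrade : s ≤ C * (x / T) ^ β * τ) :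
    s ^ (k + 1) * x ^ (-(k : ℝ)) ≤ (C / T ^ β) ^ k * τ ^ k * (s * x ^ ((k : ℝ) * (β - 1))) := by
  have hsc : s ≤ C * τ / T ^ β * x ^ β := hgrade.trans_eq <| by
    rw [Real.div_rpow hx.le hT.le]
    ring
  rw [← mul_pow, div_mul_eq_mul_div]
  exact pow_succ_mul_rpow_neg_le hx hs hsc

theorem stmt0_general (k : ℕ) (β C T : ℝ)
    (hβ : (k : ℝ) * (β - 1) + 1 > 0) (hC : 0 < C) (hT : 0 < T) :
    ∃ C' : ℝ, 0 < C' ∧ ∀ (N : ℕ) (t : ℕ → ℝ) (τ : ℝ), 0 < τ →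
      t 0 = 0 → t N = T → (∀ n < N, t n < t (n + 1)) →
      (∀ n, 1 ≤ n → n ≤ N → t n - t (n - 1) ≤ τ) →
      (∀ n, 1 ≤ n → n ≤ N → t n - t (n - 1) ≤ C * (t n / T) ^ β * τ) →
      ∑ j ∈ Finset.Icc (k + 1) N, (t j - t (j - 1)) ^ (k + 1) * (t j) ^ (-(k : ℝ))
        ≤ C' * τ ^ k := by
  set p : ℝ := (k : ℝ) * (β - 1) + 1
  have hmin : 0 < min 1 p := lt_min one_pos hβ
  refine ⟨(C / T ^ β) ^ k * (T ^ p / min 1 p), by positivity, ?_⟩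
  intro N t τ hτ ht0 htN hstep _ hgrade
  have hmono : StrictMonoOn t (Set.Iic N) := strictMonoOn_Iic_of_lt_succ (by simpa using hstep)
  have hsum := min_one_mul_sum_sub_mul_rpow_sub_one_le k hβ hmono.monotoneOn ht0.ge
  rw [htN, ht0, Real.zero_rpow hβ.ne', sub_zero, ← le_div_iff₀' hmin,
    show p - 1 = (k : ℝ) * (β - 1) by ring] at hsum
  calc ∑ j ∈ Icc (k + 1) N, (t j - t (j - 1)) ^ (k + 1) * t j ^ (-(k : ℝ))
      ≤ ∑ j ∈ Icc (k + 1) N,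
          (C / T ^ β) ^ k * τ ^ k * ((t j - t (j - 1)) * t j ^ ((k : ℝ) * (β - 1))) :=
        sum_le_sum fun j hj => by
          obtain ⟨hjk, hjN⟩ := mem_Icc.1 hj
          exact pow_succ_mul_rpow_neg_le_of_graded hT (ht0 ▸ hmono (Nat.zero_le N) hjN (by omega))
            (sub_nonneg.2 (hmono.monotoneOn (show j - 1 ≤ N by omega) hjN (Nat.sub_le j 1)))
            (hgrade j (by omega) hjN)
    _ = (C / T ^ β) ^ k * τ ^ k *
          ∑ j ∈ Icc (k + 1) N, (t j - t (j - 1)) * t j ^ ((k : ℝ) * (β - 1)) :=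
        (mul_sum _ _ _).symm
    _ ≤ (C / T ^ β) ^ k * τ ^ k * (T ^ p / min 1 p) := by gcongr
    _ = (C / T ^ β) ^ k * (T ^ p / min 1 p) * τ ^ k := by ring

/-- For any positive integer `k` and real `β` with `k(β-1)+1 > 0`, on a graded partition
`0 = t_0 < t_1 < ⋯ < t_N = T` with stepsizes `τ_n = t_n - t_{n-1} ≤ C (t_n/T)^β τ`
(`τ` the maximal stepsize), the sum `∑_{j=k+1}^N τ_j^{k+1} t_j^{-k}` is bounded by `C' τ^k`
with `C'` independent of `τ` and `N`. -/
theorem stmt0 (k : ℕ) (hk : 0 < k) (β C T : ℝ)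
    (hβ : (k : ℝ) * (β - 1) + 1 > 0) (hC : 0 < C) (hT : 0 < T) :
    ∃ C' : ℝ, 0 < C' ∧ ∀ (N : ℕ) (t : ℕ → ℝ) (τ : ℝ), 0 < τ →
      t 0 = 0 → t N = T → (∀ n < N, t n < t (n + 1)) →
      (∀ n, 1 ≤ n → n ≤ N → t n - t (n - 1) ≤ τ) →
      (∀ n, 1 ≤ n → n ≤ N → t n - t (n - 1) ≤ C * (t n / T) ^ β * τ) →
      ∑ j ∈ Finset.Icc (k + 1) N, (t j - t (j - 1)) ^ (k + 1) * (t j) ^ (-(k : ℝ))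
        ≤ C' * τ ^ k :=
  stmt0_general k β C T hβ hC hT
end

section
/- Graded mesh has O(τ^{−1}) steps: let 0 < β < 1, T > 0, and let 0 = t_0 < t_1 < ⋯ < t_N = T satisfy c (t_n/T)^β τ ≤ τ_n ≤ C (t_n/T)^β τ for all n ≥ 1, where τ_n = t_n − t_{n−1} and 0 < c ≤ C. Then N ≤ C' τ^{−1} for a constant C' depending only on c, β, T. -/
/-- Concavity/tangent-line inequality for `x ^ p`, `0 < p < 1`:
`p * b^(p-1) * (b - a) ≤ b^p - a^p` for `0 ≤ a ≤ b`, `0 < b`. -/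
lemma stmt17_key {p a b : ℝ} (hp0 : 0 < p) (hp1 : p < 1)
    (ha : 0 ≤ a) (hab : a ≤ b) (hb : 0 < b) :
    p * b ^ (p - 1) * (b - a) ≤ b ^ p - a ^ p := by
  have hs : -1 ≤ a / b - 1 := by
    have : 0 ≤ a / b := div_nonneg ha hb.le
    linarith
  have hber : (1 + (a / b - 1)) ^ p ≤ 1 + p * (a / b - 1) :=
    rpow_one_add_le_one_add_mul_self hs hp0.le hp1.le
  have hab' : (a / b) ^ p ≤ 1 + p * (a / b - 1) := by
    simpa using hber
  have hdiv : (a / b) ^ p = a ^ p / b ^ p := Real.div_rpow ha hb.le p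
  have hbp : 0 < b ^ p := Real.rpow_pos_of_pos hb p
  have h1 : a ^ p ≤ (1 + p * (a / b - 1)) * b ^ p := by
    rw [hdiv] at hab'
    calc a ^ p = a ^ p / b ^ p * b ^ p := by field_simp
    _ ≤ (1 + p * (a / b - 1)) * b ^ p := by
        exact mul_le_mul_of_nonneg_right hab' hbp.le
  have h2 : b ^ (p - 1) * b = b ^ p := by
    rw [← Real.rpow_add_one hb.ne' (p - 1)]; ring_nf
  have h3 : b ^ (p - 1) * a = b ^ p * (a / b) := by
    rw [← h2]; field_simp
  nlinarith [h1, h2, h3, hbp]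

/-- Graded mesh has `O(τ⁻¹)` steps: if `0 < β < 1` and the partition
`0 = t_0 < ⋯ < t_N = T` satisfies `c (t_n/T)^β τ ≤ τ_n ≤ C (t_n/T)^β τ`, then
`N ≤ C' τ⁻¹` with `C'` depending only on `c`, `β`, `T`. -/
theorem stmt17 (β T c C : ℝ) (hβ0 : 0 < β) (hβ1 : β < 1) (hT : 0 < T)
    (hc : 0 < c) (hcC : c ≤ C) :
    ∃ C' : ℝ, 0 < C' ∧ ∀ (N : ℕ) (t : ℕ → ℝ) (τ : ℝ), 0 < τ →
      t 0 = 0 → t N = T → (∀ n < N, t n < t (n + 1)) →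
      (∀ n, 1 ≤ n → n ≤ N →
        c * (t n / T) ^ β * τ ≤ t n - t (n - 1) ∧
        t n - t (n - 1) ≤ C * (t n / T) ^ β * τ) →
      (N : ℝ) ≤ C' / τ := by
  set p : ℝ := 1 - β with hp
  have hp0 : 0 < p := by simp [hp]; linarith
  have hp1 : p < 1 := by simp [hp]; linarith
  refine ⟨T / (p * c), div_pos hT (mul_pos hp0 hc), ?_⟩
  intro N t τ hτ ht0 htN hinc hstep
  -- nonnegativity / positivity of the mesh points
  have hnn : ∀ i, i ≤ N → 0 ≤ t i := by
    intro i hi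
    induction i with
    | zero => simp [ht0]
    | succ k ih =>
      have hk : k < N := hi
      exact le_of_lt (lt_of_le_of_lt (ih hk.le) (hinc k hk))
  -- each step of the telescoping sum is bounded below
  have hterm : ∀ i ∈ Finset.range N,
      p * c * τ / T ^ β ≤ t (i + 1) ^ p - t i ^ p := by
    intro i hi
    rw [Finset.mem_range] at hi
    have hb : 0 < t (i + 1) := lt_of_le_of_lt (hnn i hi.le) (hinc i hi)
    have ha : 0 ≤ t i := hnn i hi.le
    have hab : t i ≤ t (i + 1) := (hinc i hi).le
    have hlow := (hstep (i + 1) (by omega) (by omega)).1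
    simp only [Nat.add_sub_cancel] at hlow
    have hkey := stmt17_key hp0 hp1 ha hab hb
    have h1 : p * (t (i + 1)) ^ (p - 1) * (c * (t (i + 1) / T) ^ β * τ)
        ≤ t (i + 1) ^ p - t i ^ p := by
      refine le_trans ?_ hkey
      exact mul_le_mul_of_nonneg_left hlow
        (mul_nonneg hp0.le (Real.rpow_nonneg hb.le _))
    have hdiv : (t (i + 1) / T) ^ β = t (i + 1) ^ β / T ^ β :=
      Real.div_rpow hb.le hT.le β
    have hpow : (t (i + 1)) ^ (p - 1) * (t (i + 1)) ^ β = 1 := by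
      rw [← Real.rpow_add hb]
      have : p - 1 + β = 0 := by rw [hp]; ring
      rw [this, Real.rpow_zero]
    have hTβ : 0 < T ^ β := Real.rpow_pos_of_pos hT β
    calc p * c * τ / T ^ β
        = p * c * τ * (t (i + 1) ^ (p - 1) * t (i + 1) ^ β) / T ^ β := by
          rw [hpow]; ring
      _ = p * (t (i + 1)) ^ (p - 1) * (c * (t (i + 1) ^ β / T ^ β) * τ) := by
          ring
      _ = p * (t (i + 1)) ^ (p - 1) * (c * (t (i + 1) / T) ^ β * τ) := by
          rw [hdiv]
      _ ≤ t (i + 1) ^ p - t i ^ p := h1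
  -- telescoping
  have htel : ∑ i ∈ Finset.range N, (t (i + 1) ^ p - t i ^ p) = T ^ p := by
    rw [Finset.sum_range_sub (fun n => t n ^ p)]
    simp [ht0, htN, Real.zero_rpow hp0.ne']
  have hsum : (N : ℝ) * (p * c * τ / T ^ β) ≤ T ^ p := by
    rw [← htel]
    have := Finset.card_nsmul_le_sum (Finset.range N)
      (fun i => t (i + 1) ^ p - t i ^ p) (p * c * τ / T ^ β) hterm
    simpa [nsmul_eq_mul] using this
  -- conclude
  have hTβ : 0 < T ^ β := Real.rpow_pos_of_pos hT β
  have hTp : T ^ p * T ^ β = T := by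
    rw [← Real.rpow_add hT]
    simp [hp]
  rw [div_div]
  rw [le_div_iff₀ (by positivity)]
  calc (N : ℝ) * (p * c * τ) = (N : ℝ) * (p * c * τ / T ^ β) * T ^ β := by
        field_simp
    _ ≤ T ^ p * T ^ β := mul_le_mul_of_nonneg_right hsum hTβ.le
    _ = T := hTp
end
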